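/- If x_{n+1} ≠ x_n, then u_n is a proper prefix of h_n. -/

import Mathlib

variable {A : Type*} [DecidableEq A]

/-- `psiW a` is the morphism with `ψ_a(a) = a` and `ψ_a(x) = ax` for `x ≠ a`. -/
def psiW (a : A) (w : List A) : List A :=
  w.flatMap (fun b => if b = a then [a] else [a, b])

/-- `muW x n = ψ_{x 1} ∘ ⋯ ∘ ψ_{x n}`. -/
def muW (x : ℕ → A) : ℕ → List A → List A
  | 0 => id
  | n + 1 => fun w => muW x n (psiW (x (n + 1)) w)

/-- `hW x n = μ_n (x_{n+1})`. -/
def hW (x : ℕ → A) (n : ℕ) : List A := muW x n [x (n + 1)]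

/-- `p` is the palindromic right-closure of `w`: the shortest palindrome having `w`
as a prefix. -/
def IsPalClosure (w p : List A) : Prop :=
  w <+: p ∧ p.reverse = p ∧
    ∀ q : List A, w <+: q → q.reverse = q → p.length ≤ q.length

/-- The finite word `w` is a prefix of the infinite word `s`. -/
def PrefInf (w : List A) (s : ℕ → A) : Prop :=
  ∀ i : ℕ, ∀ h : i < w.length, w[i] = s i

/-- Number of occurrences (positions) of `w` as a factor of `v`. -/
def occ (w v : List A) : ℕ :=
  (List.range (v.length + 1)).countP
    (fun i => decide (i + w.length ≤ v.length ∧ (v.drop i).take w.length = w))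

/-- `cat z k = z 1 ++ z 2 ++ ⋯ ++ z k`. -/
def cat (z : ℕ → List A) (k : ℕ) : List A := ((List.range' 1 k).map z).flatten

/-- `z` is the Ziv-Lempel factorization of the infinite word `s`: each `z m` is
the shortest prefix of `z m · z (m+1) ⋯` occurring only once in `z 1 ⋯ z m`. -/
def IsZFact (s : ℕ → A) (z : ℕ → List A) : Prop :=
  ∀ m : ℕ, 1 ≤ m → z m ≠ [] ∧ PrefInf (cat z m) s ∧
    occ (z m) (cat z m) = 1 ∧
    ∀ p : List A, p <+: z m → p ≠ z m → 2 ≤ occ p (cat z m)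

/-- `c` is the Crochemore factorization of the infinite word `s`: each `c m` is
either a fresh letter, or the longest prefix of `c m · c (m+1) ⋯` occurring
twice in `c 1 ⋯ c m`. -/
def IsCFact (s : ℕ → A) (c : ℕ → List A) : Prop :=
  ∀ m : ℕ, 1 ≤ m → c m ≠ [] ∧ PrefInf (cat c m) s ∧
    ((∃ a : A, c m = [a] ∧ a ∉ cat c (m - 1)) ∨
      (2 ≤ occ (c m) (cat c m) ∧
        occ (c m ++ [s (cat c m).length]) (cat c m ++ [s (cat c m).length]) = 1))

/-!
Write `Pal` for iterated palindromic closure, so that `u (n + 1) = Pal(x 1 ⋯ x n)`. The closure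
of `w` is the palindrome `p ⊒ w` with `|p| + |q| ≤ 2|w|` for every palindromic suffix `q` of `w`
(a palindrome extending `w` by fewer than `|w|` letters overlaps `w` in a palindromic suffix).
Since the nonempty palindromic suffixes of `ψ_a(v) a` are exactly the words `ψ_a(t) a` with `t`
a palindromic suffix of `v`, this characterization yields Justin's formula
`Pal(a s) = ψ_a(Pal s) a`. By induction on `s`, `Pal(s) t = μ_s(w)` for some `t` containing two
distinct letters whenever `w` does. Finally, for `x (n + 1) ≠ x n`,
`h n = μ_{x 1 ⋯ x (n - 1)}(x n · x (n + 1))`, so `u n` is a proper prefix of `h n`.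
-/

theorem List.reverse_drop_eq_of_prefix_of_reverse_eq {α : Type*} {w r : List α}
    (hr : r.reverse = r) (hwr : w <+: r) (hlen : r.length ≤ 2 * w.length) :
    (w.drop (r.length - w.length)).reverse = w.drop (r.length - w.length) := by
  obtain ⟨y, rfl⟩ := hwr
  rw [show (w ++ y).length - w.length = y.length by simp]
  rw [← List.take_append_drop y.length w, List.reverse_append, List.reverse_append,
    List.append_assoc] at hr
  have hy : y.length ≤ w.length := by simp only [List.length_append] at hlen; omega
  obtain ⟨-, hr⟩ := List.append_inj hr (by simp [hy])
  exact (List.append_inj hr (by simp)).1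

section PalClosure

variable {α : Type*} {w p t : List α}

theorem IsPalClosure.length_add_le (h : IsPalClosure w p) (ht : t <:+ w)
    (htp : t.reverse = t) : p.length + t.length ≤ 2 * w.length := by
  obtain ⟨v, rfl⟩ := ht
  have := h.2.2 (v ++ t ++ v.reverse) (List.prefix_append _ _) (by simp [htp])
  simp only [List.length_append, List.length_reverse] at this ⊢
  omega

theorem isPalClosure_of_length_add_le (hwp : w <+: p) (hp : p.reverse = p)
    (h : ∀ t, t <:+ w → t.reverse = t → p.length + t.length ≤ 2 * w.length) :
    IsPalClosure w p := by
  refine ⟨hwp, hp, fun q hwq hq => ?_⟩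
  by_cases hlen : q.length ≤ 2 * w.length
  · have := h _ (List.drop_suffix _ _)
      (List.reverse_drop_eq_of_prefix_of_reverse_eq hq hwq hlen)
    have := hwq.length_le
    simp only [List.length_drop] at *
    omega
  · have := h [] List.nil_suffix rfl
    simp only [List.length_nil] at this
    omega

theorem IsPalClosure.exists_eq (h : IsPalClosure w p) (ht : t <:+ w) (htp : t.reverse = t) :
    ∃ x m, w = x ++ m ++ t ∧ p = x ++ m ++ t ++ x.reverse := by
  have hlen := h.length_add_le ht htp
  obtain ⟨⟨y, rfl⟩, hp, -⟩ := h
  obtain ⟨v, rfl⟩ := ht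
  have hyv : y.reverse <+: v := by
    refine List.prefix_of_prefix_length_le ⟨(v ++ t).reverse, ?_⟩
      (List.prefix_append v (t ++ y)) ?_
    · simpa using hp
    · simp only [List.length_append] at hlen; simp only [List.length_reverse]; omega
  obtain ⟨m, rfl⟩ := hyv
  exact ⟨y.reverse, m, rfl, by simp⟩

theorem IsPalClosure.unique {q : List α} (hp : IsPalClosure w p) (hq : IsPalClosure w q) :
    p = q := by
  have hlen : p.length = q.length :=
    le_antisymm (hp.2.2 q hq.1 hq.2.1) (hq.2.2 p hp.1 hp.2.1)
  obtain ⟨x, m, rfl, rfl⟩ := hp.exists_eq List.nil_suffix rfl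
  obtain ⟨x', m', hw, rfl⟩ := hq.exists_eq List.nil_suffix rfl
  simp only [List.append_nil] at hw hlen ⊢
  rw [hw] at hlen ⊢
  simp only [List.append_assoc, List.length_append, List.length_reverse] at hlen
  rw [(List.append_inj hw (by omega)).1]

end PalClosure

theorem List.eq_cons_of_suffix_append_singleton {α : Type*} {q l : List α} {e : α}
    (hq : q <:+ l ++ [e]) (hqp : q.reverse = q) (hne : q ≠ []) : ∃ r, q = e :: r := by
  rw [← List.reverse_prefix, List.reverse_append, hqp] at hq
  rcases List.prefix_cons_iff.1 hq with h | ⟨r, h, -⟩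
  · exact absurd h hne
  · exact ⟨r, h⟩

section Psi

variable {a : A} {l v : List A}

@[simp] theorem psiW_nil : psiW a [] = [] := rfl

@[simp] theorem psiW_cons_self (l : List A) : psiW a (a :: l) = a :: psiW a l := by
  simp [psiW]

@[simp] theorem psiW_cons_of_ne {b : A} (h : b ≠ a) (l : List A) :
    psiW a (b :: l) = a :: b :: psiW a l := by
  simp [psiW, h]

@[simp] theorem psiW_append (l₁ l₂ : List A) :
    psiW a (l₁ ++ l₂) = psiW a l₁ ++ psiW a l₂ := by
  simp [psiW]

theorem length_psiW_reverse (l : List A) : (psiW a l.reverse).length = (psiW a l).length := by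
  induction l with
  | nil => rfl
  | cons b l ih => by_cases hb : b = a <;> simp [hb, ih]

theorem psiW_reverse_append_singleton (l : List A) :
    psiW a l.reverse ++ [a] = a :: (psiW a l).reverse := by
  induction l with
  | nil => rfl
  | cons b l ih =>
    by_cases hb : b = a
    · subst hb
      simp [ih]
    · calc psiW a (b :: l).reverse ++ [a] = (psiW a l.reverse ++ [a]) ++ [b, a] := by simp [hb]
        _ = _ := by simp [ih, hb]

theorem eq_of_psiW_eq_cons {c : A} {r : List A} (h : psiW a l = c :: r) : c = a := by
  rcases l with _ | ⟨b, l⟩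
  · simp at h
  · by_cases hb : b = a <;> simp [hb] at h <;> exact h.1.symm

theorem psiW_injective (a : A) : Function.Injective (psiW a) := by
  intro l₁
  induction l₁ with
  | nil => rintro (_ | ⟨c, l₂⟩) h <;> [rfl; (by_cases hc : c = a <;> simp [hc] at h)]
  | cons b l₁ ih =>
    rintro (_ | ⟨c, l₂⟩) h
    · by_cases hb : b = a <;> simp [hb] at h
    by_cases hb : b = a <;> by_cases hc : c = a
    · simp only [hb, hc, psiW_cons_self, List.cons.injEq, true_and] at h ⊢
      exact ih h
    · simp only [hb, psiW_cons_self, psiW_cons_of_ne hc, List.cons.injEq, true_and] at h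
      exact absurd (eq_of_psiW_eq_cons h) hc
    · simp only [hc, psiW_cons_self, psiW_cons_of_ne hb, List.cons.injEq, true_and] at h
      exact absurd (eq_of_psiW_eq_cons h.symm) hb
    · simp only [psiW_cons_of_ne hb, psiW_cons_of_ne hc, List.cons.injEq, true_and] at h
      rw [h.1, ih h.2]

theorem reverse_psiW_append_singleton_eq_iff :
    (psiW a l ++ [a]).reverse = psiW a l ++ [a] ↔ l.reverse = l := by
  rw [List.reverse_append, List.reverse_singleton, List.singleton_append,
    ← psiW_reverse_append_singleton, List.append_left_inj, (psiW_injective a).eq_iff]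

theorem singleton_prefix_psiW_append_singleton (l : List A) : [a] <+: psiW a l ++ [a] := by
  rcases l with _ | ⟨b, l⟩
  · exact List.prefix_refl _
  · by_cases hb : b = a <;> simp [hb]

theorem exists_suffix_of_cons_suffix_psiW_append_singleton {r : List A}
    (h : a :: r <:+ psiW a v ++ [a]) : ∃ t, t <:+ v ∧ a :: r = psiW a t ++ [a] := by
  induction v with
  | nil =>
    obtain rfl : r = [] := by simpa using h.length_le
    exact ⟨[], List.nil_suffix, rfl⟩
  | cons b v ih =>
    have ih' (h : a :: r <:+ psiW a v ++ [a]) : ∃ t, t <:+ b :: v ∧ a :: r = psiW a t ++ [a] :=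
      (ih h).imp fun t ht => ⟨ht.1.trans (List.suffix_cons b v), ht.2⟩
    by_cases hb : b = a
    · subst hb
      rcases List.suffix_cons_iff.1 (by simpa using h) with h | h
      · exact ⟨_, List.suffix_refl _, by simpa using h⟩
      · exact ih' h
    · rcases List.suffix_cons_iff.1 (by simpa [hb] using h) with h | h
      · exact ⟨_, List.suffix_refl _, by simpa [hb] using h⟩
      rcases List.suffix_cons_iff.1 h with h | h
      · exact absurd (List.cons.inj h).1.symm hb
      · exact ih' h

theorem cons_suffix_psiW_of_ne {d : A} {r : List A} (h : d :: r <:+ psiW a v) (hd : d ≠ a) :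
    a :: d :: r <:+ psiW a v := by
  induction v with
  | nil => simp at h
  | cons b v ih =>
    have hv : psiW a v <:+ psiW a (b :: v) := ⟨if b = a then [a] else [a, b], rfl⟩
    by_cases hb : b = a
    · subst hb
      rcases List.suffix_cons_iff.1 (by simpa using h) with h | h
      · exact absurd (List.cons.inj h).1 hd
      · exact (ih h).trans hv
    · rcases List.suffix_cons_iff.1 (by simpa [hb] using h) with h | h
      · exact absurd (List.cons.inj h).1 hd
      rcases List.suffix_cons_iff.1 h with h | h
      · rw [psiW_cons_of_ne hb, ← h]
      · exact (ih h).trans hv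

theorem exists_eq_psiW_append_singleton_of_suffix {q : List A} (hq : q <:+ psiW a v ++ [a])
    (hqp : q.reverse = q) (hne : q ≠ []) :
    ∃ t, t <:+ v ∧ t.reverse = t ∧ q = psiW a t ++ [a] := by
  obtain ⟨r, rfl⟩ := List.eq_cons_of_suffix_append_singleton hq hqp hne
  obtain ⟨t, htv, heq⟩ := exists_suffix_of_cons_suffix_psiW_append_singleton hq
  rw [heq] at hqp ⊢
  exact ⟨t, htv, reverse_psiW_append_singleton_eq_iff.1 hqp, rfl⟩

end Psi

section Justin

variable {a c : A} {v Q : List A}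

theorem IsPalClosure.length_psiW_add_le (h : IsPalClosure v Q) {t : List A} (ht : t <:+ v)
    (htp : t.reverse = t) : (psiW a Q).length + (psiW a t).length ≤ 2 * (psiW a v).length := by
  obtain ⟨x, m, rfl, rfl⟩ := h.exists_eq ht htp
  simp only [psiW_append, List.length_append, length_psiW_reverse]
  omega

theorem exists_eq_psiW_of_suffix_psiW_of_ne {q : List A} (hq : q <:+ psiW a (v ++ [c]))
    (hca : c ≠ a) (hqp : q.reverse = q) (hne : q ≠ []) :
    ∃ t, t <:+ v ++ [c] ∧ t.reverse = t ∧ a :: q ++ [a] = psiW a t ++ [a] := by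
  have hψ : psiW a (v ++ [c]) = psiW a v ++ [a] ++ [c] := by simp [hca]
  obtain ⟨r, hr⟩ := List.eq_cons_of_suffix_append_singleton (hψ ▸ hq) hqp hne
  have haq : a :: q <:+ psiW a (v ++ [c]) := hr ▸ cons_suffix_psiW_of_ne (hr ▸ hq) hca
  exact exists_eq_psiW_append_singleton_of_suffix (List.suffix_append_self_iff.2 haq)
    (by simp [hqp]) (by simp)

theorem IsPalClosure.map_psiW (h : IsPalClosure (v ++ [c]) Q) :
    IsPalClosure (psiW a v ++ [a, c]) (psiW a Q ++ [a]) := by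
  have hwV : psiW a v ++ [a, c] <+: psiW a (v ++ [c]) ++ [a] := by
    by_cases hca : c = a <;> simp [hca]
  have hVQ : psiW a (v ++ [c]) ++ [a] <+: psiW a Q ++ [a] := by
    obtain ⟨y, rfl⟩ := h.1
    rw [psiW_append (v ++ [c]) y, List.append_assoc]
    exact (List.prefix_append_right_inj _).2 (singleton_prefix_psiW_append_singleton y)
  refine isPalClosure_of_length_add_le (hwV.trans hVQ)
    (reverse_psiW_append_singleton_eq_iff.2 h.2.1) fun q hq hqp => ?_
  by_cases hca : c = a
  · subst hca
    have hw : psiW c v ++ [c, c] = psiW c (v ++ [c]) ++ [c] := by simp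
    rw [hw] at hq ⊢
    rcases eq_or_ne q [] with rfl | hne
    · have := h.length_psiW_add_le (a := c) List.nil_suffix rfl
      simp at this ⊢
      omega
    · obtain ⟨t, htv, htp, rfl⟩ := exists_eq_psiW_append_singleton_of_suffix hq hqp hne
      have := h.length_psiW_add_le (a := c) htv htp
      simp at this ⊢
      omega
  · have hw : psiW a v ++ [a, c] = psiW a (v ++ [c]) := by simp [hca]
    rw [hw] at hq ⊢
    rcases eq_or_ne q [] with rfl | hne
    · have := h.length_psiW_add_le (a := a) (t := [c]) (List.suffix_append _ _) rfl
      simp [hca] at this ⊢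
      omega
    · obtain ⟨t, htv, htp, heq⟩ := exists_eq_psiW_of_suffix_psiW_of_ne hq hca hqp hne
      have hlen := congrArg List.length heq
      have := h.length_psiW_add_le (a := a) htv htp
      simp at hlen this ⊢
      omega

end Justin

/-- Justin's formula `Pal(a s) = ψ_a(Pal(s)) a`, taken as the definition of iterated
palindromic closure. -/
def pal : List A → List A
  | [] => []
  | a :: s => psiW a (pal s) ++ [a]

theorem isPalClosure_pal_append (s : List A) (c : A) :
    IsPalClosure (pal s ++ [c]) (pal (s ++ [c])) := by
  induction s with
  | nil =>
    refine isPalClosure_of_length_add_le (List.prefix_refl _) rfl fun t ht _ => ?_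
    have := ht.length_le
    simp [pal] at this ⊢
    omega
  | cons a s ih => simpa [pal] using ih.map_psiW (a := a)

theorem mem_psiW_of_mem {a b : A} {l : List A} (h : b ∈ l) : b ∈ psiW a l := by
  simp only [psiW, List.mem_flatMap]
  exact ⟨b, h, by split_ifs with hb <;> simp [hb]⟩

theorem self_mem_psiW {a : A} {l : List A} (h : l ≠ []) : a ∈ psiW a l := by
  obtain ⟨b, l, rfl⟩ := List.exists_cons_of_ne_nil h
  by_cases hb : b = a <;> simp [hb]

theorem exists_psiW_eq_cons {a : A} {t : List A} (ht : ∃ b ∈ t, ∃ c ∈ t, b ≠ c) :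
    ∃ t', psiW a t = a :: t' ∧ ∃ b ∈ t', ∃ c ∈ t', b ≠ c := by
  obtain ⟨b, hb, c, hc, hbc⟩ := ht
  obtain ⟨d, r, rfl⟩ := List.exists_cons_of_ne_nil (List.ne_nil_of_mem hb)
  have hr : r ≠ [] := by
    rintro rfl
    simp_all
  obtain ⟨e, he, hea⟩ : ∃ e ∈ d :: r, e ≠ a := by
    by_cases hba : b = a
    · exact ⟨c, hc, hba ▸ hbc.symm⟩
    · exact ⟨b, hb, hba⟩
  refine ⟨(if d = a then [] else [d]) ++ psiW a r, ?_, e, ?_, a, ?_, hea⟩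
  · by_cases hd : d = a <;> simp [hd]
  · rcases List.mem_cons.1 he with rfl | he
    · simp [hea]
    · exact List.mem_append_right _ (mem_psiW_of_mem he)
  · exact List.mem_append_right _ (self_mem_psiW hr)

theorem exists_pal_append_eq_foldr_psiW {w : List A} (hw : ∃ b ∈ w, ∃ c ∈ w, b ≠ c)
    (s : List A) : ∃ t, (∃ b ∈ t, ∃ c ∈ t, b ≠ c) ∧ pal s ++ t = s.foldr psiW w := by
  induction s with
  | nil => exact ⟨w, hw, rfl⟩
  | cons a s ih =>
    obtain ⟨t, ht, heq⟩ := ih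
    obtain ⟨t', hψ, ht'⟩ := exists_psiW_eq_cons (a := a) ht
    exact ⟨t', ht', by simp [pal, ← heq, hψ]⟩

def dirWord {α : Type*} (x : ℕ → α) (n : ℕ) : List α := (List.range' 1 n).map x

theorem dirWord_succ {α : Type*} (x : ℕ → α) (n : ℕ) :
    dirWord x (n + 1) = dirWord x n ++ [x (n + 1)] := by
  simp [dirWord, List.range'_concat, Nat.add_comm]

theorem muW_eq_foldr (x : ℕ → A) (n : ℕ) (w : List A) :
    muW x n w = (dirWord x n).foldr psiW w := by
  induction n generalizing w with
  | zero => rfl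
  | succ n ih => simp [muW, ih, dirWord_succ]

theorem eq_pal_dirWord (x : ℕ → A) (u : ℕ → List A) (hu1 : u 1 = [])
    (hu : ∀ n : ℕ, 1 ≤ n → IsPalClosure (u n ++ [x n]) (u (n + 1))) (n : ℕ) :
    u (n + 1) = pal (dirWord x n) := by
  induction n with
  | zero => exact hu1
  | succ n ih =>
    rw [dirWord_succ]
    exact (hu (n + 1) (by omega)).unique (ih ▸ isPalClosure_pal_append _ _)

theorem u_proper_prefix_h (x : ℕ → A) (u : ℕ → List A) (hu1 : u 1 = [])
    (hu : ∀ n : ℕ, 1 ≤ n → IsPalClosure (u n ++ [x n]) (u (n + 1))) (n : ℕ) (hn : 1 ≤ n) (hne : x (n + 1) ≠ x n) :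
    u n <+: hW x n ∧ u n ≠ hW x n := by
  obtain ⟨k, rfl⟩ : ∃ k, n = k + 1 := ⟨n - 1, by omega⟩
  have hh : hW x (k + 1) = (dirWord x k).foldr psiW [x (k + 1), x (k + 2)] := by
    simp [hW, muW_eq_foldr, dirWord_succ, hne]
  obtain ⟨t, ⟨b, hb, -⟩, heq⟩ := exists_pal_append_eq_foldr_psiW
    (w := [x (k + 1), x (k + 2)]) ⟨_, by simp, _, by simp, hne.symm⟩ (dirWord x k)
  rw [eq_pal_dirWord x u hu1 hu k, hh, ← heq]
  exact ⟨List.prefix_append _ _, fun h => List.ne_nil_of_mem hb (List.self_eq_append_right.1 h)⟩
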